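/- For every i, j, k ∈ {+1, −1} and all r, s ∈ ℝ³ with ‖r‖ ≤ 1 and ‖s‖ ≤ 1, the real number Tr[ Π#_{[i,j,k]} · (ρ_r ⊗ ρ_s) ] satisfies 0 ≤ Tr[ Π#_{[i,j,k]} (ρ_r ⊗ ρ_s) ] ≤ 1; i.e., the operators Π#_{[i,j,k]} yield valid probabilities on all product (hence all separable) two-qubit states. -/

import Mathlib

open Matrix Complex
open scoped Kronecker Matrix ComplexOrder

noncomputable section

/-- Pauli matrix σ_x. -/
def σx : Matrix (Fin 2) (Fin 2) ℂ := !![0, 1; 1, 0]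
/-- Pauli matrix σ_y. -/
def σy : Matrix (Fin 2) (Fin 2) ℂ := !![0, -Complex.I; Complex.I, 0]
/-- Pauli matrix σ_z. -/
def σz : Matrix (Fin 2) (Fin 2) ℂ := !![1, 0; 0, -1]

/-- The two-element set {+1, -1} of outcomes/signs. -/
def pm : Finset ℝ := {1, -1}

/-- Qubit state with Bloch vector m: ρ_m = (1/2)(I + m·σ). -/
def rho (m : Fin 3 → ℝ) : Matrix (Fin 2) (Fin 2) ℂ :=
  (2 : ℂ)⁻¹ • ((1 : Matrix (Fin 2) (Fin 2) ℂ) + (m 0 : ℂ) • σx + (m 1 : ℂ) • σy + (m 2 : ℂ) • σz)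

/-- The antiparallel-configuration effects Π↑↓_{[i,j,k]}. -/
def PiAnti (i j k : ℝ) : Matrix (Fin 2 × Fin 2) (Fin 2 × Fin 2) ℂ :=
  (16 : ℂ)⁻¹ • ((2 : ℂ) • (1 : Matrix (Fin 2 × Fin 2) (Fin 2 × Fin 2) ℂ)
    + (i : ℂ) • (σx ⊗ₖ (1 : Matrix (Fin 2) (Fin 2) ℂ) - (1 : Matrix (Fin 2) (Fin 2) ℂ) ⊗ₖ σx)
    + (j : ℂ) • (σy ⊗ₖ (1 : Matrix (Fin 2) (Fin 2) ℂ) - (1 : Matrix (Fin 2) (Fin 2) ℂ) ⊗ₖ σy)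
    + (k : ℂ) • (σz ⊗ₖ (1 : Matrix (Fin 2) (Fin 2) ℂ) - (1 : Matrix (Fin 2) (Fin 2) ℂ) ⊗ₖ σz)
    - ((i * j : ℝ) : ℂ) • (σx ⊗ₖ σy + σy ⊗ₖ σx)
    - ((j * k : ℝ) : ℂ) • (σy ⊗ₖ σz + σz ⊗ₖ σy)
    - ((k * i : ℝ) : ℂ) • (σz ⊗ₖ σx + σx ⊗ₖ σz))

/-- The GPT effects Π#_{[i,j,k]}. -/
def PiSharp (i j k : ℝ) : Matrix (Fin 2 × Fin 2) (Fin 2 × Fin 2) ℂ :=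
  (16 : ℂ)⁻¹ • ((2 : ℂ) • (1 : Matrix (Fin 2 × Fin 2) (Fin 2 × Fin 2) ℂ)
    + (i : ℂ) • (σx ⊗ₖ (1 : Matrix (Fin 2) (Fin 2) ℂ) + (1 : Matrix (Fin 2) (Fin 2) ℂ) ⊗ₖ σx)
    + (j : ℂ) • (σy ⊗ₖ (1 : Matrix (Fin 2) (Fin 2) ℂ) + (1 : Matrix (Fin 2) (Fin 2) ℂ) ⊗ₖ σy)
    + (k : ℂ) • (σz ⊗ₖ (1 : Matrix (Fin 2) (Fin 2) ℂ) + (1 : Matrix (Fin 2) (Fin 2) ℂ) ⊗ₖ σz)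
    + ((i * j : ℝ) : ℂ) • (σx ⊗ₖ σy + σy ⊗ₖ σx)
    + ((j * k : ℝ) : ℂ) • (σy ⊗ₖ σz + σz ⊗ₖ σy)
    + ((k * i : ℝ) : ℂ) • (σz ⊗ₖ σx + σx ⊗ₖ σz))

end

noncomputable section

/-- The parallel-configuration effects Π↑↑_{[i,j,k]} of Carmeli et al. -/
def PiPar (i j k : ℝ) : Matrix (Fin 2 × Fin 2) (Fin 2 × Fin 2) ℂ :=
  (32 : ℂ)⁻¹ • ((4 : ℂ) • (1 : Matrix (Fin 2 × Fin 2) (Fin 2 × Fin 2) ℂ)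
    + ((Real.sqrt 3 * i : ℝ) : ℂ) • (σx ⊗ₖ (1 : Matrix (Fin 2) (Fin 2) ℂ) + (1 : Matrix (Fin 2) (Fin 2) ℂ) ⊗ₖ σx)
    + ((Real.sqrt 3 * j : ℝ) : ℂ) • (σy ⊗ₖ (1 : Matrix (Fin 2) (Fin 2) ℂ) + (1 : Matrix (Fin 2) (Fin 2) ℂ) ⊗ₖ σy)
    + ((Real.sqrt 3 * k : ℝ) : ℂ) • (σz ⊗ₖ (1 : Matrix (Fin 2) (Fin 2) ℂ) + (1 : Matrix (Fin 2) (Fin 2) ℂ) ⊗ₖ σz)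
    + ((i * j : ℝ) : ℂ) • (σx ⊗ₖ σy + σy ⊗ₖ σx)
    + ((j * k : ℝ) : ℂ) • (σy ⊗ₖ σz + σz ⊗ₖ σy)
    + ((k * i : ℝ) : ℂ) • (σz ⊗ₖ σx + σx ⊗ₖ σz))

/-- The universal spin-flip (transformation) map F(A) = (Tr A)·I − A. -/
def Flip (A : Matrix (Fin 2) (Fin 2) ℂ) : Matrix (Fin 2) (Fin 2) ℂ :=
  A.trace • (1 : Matrix (Fin 2) (Fin 2) ℂ) - A

/-- The map id ⊗ Φ on M₂(ℂ) ⊗ M₂(ℂ), acting as A ⊗ B ↦ A ⊗ Φ(B) extended linearly. -/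
def idTensor (Φ : Matrix (Fin 2) (Fin 2) ℂ → Matrix (Fin 2) (Fin 2) ℂ)
    (M : Matrix (Fin 2 × Fin 2) (Fin 2 × Fin 2) ℂ) : Matrix (Fin 2 × Fin 2) (Fin 2 × Fin 2) ℂ :=
  Matrix.of fun p q => Φ (Matrix.of fun b d => M (p.1, b) (q.1, d)) p.2 q.2

/-- Choi matrix Σ_{k,l} E_{kl} ⊗ Λ(E_{kl}) of a linear map Λ on M₂(ℂ). -/
def Choi (Λ : Matrix (Fin 2) (Fin 2) ℂ →ₗ[ℂ] Matrix (Fin 2) (Fin 2) ℂ) :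
    Matrix (Fin 2 × Fin 2) (Fin 2 × Fin 2) ℂ :=
  ∑ k : Fin 2, ∑ l : Fin 2,
    (Matrix.single k l (1 : ℂ)) ⊗ₖ Λ (Matrix.single k l (1 : ℂ))

/-- Sign value of a Boolean outcome: true ↦ +1, false ↦ −1. -/
def sgn (b : Bool) : ℝ := if b then 1 else -1

/-- Unsharp spin effect P^a_{n̂,λ} = (1/2)(I + λ a n̂·σ). -/
def Peff (n : Fin 3 → ℝ) (lam a : ℝ) : Matrix (Fin 2) (Fin 2) ℂ :=
  (2 : ℂ)⁻¹ • ((1 : Matrix (Fin 2) (Fin 2) ℂ)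
    + ((lam * a * n 0 : ℝ) : ℂ) • σx + ((lam * a * n 1 : ℝ) : ℂ) • σy
    + ((lam * a * n 2 : ℝ) : ℂ) • σz)

/-- Computational basis vector |ab⟩ of ℂ²⊗ℂ². -/
def ket (a b : Fin 2) : Fin 2 × Fin 2 → ℂ := fun p => if p = (a, b) then 1 else 0

/-- Bell vector |φ⁺⟩. -/
def phiP : Fin 2 × Fin 2 → ℂ := ((Real.sqrt 2 : ℝ) : ℂ)⁻¹ • (ket 0 0 + ket 1 1)
/-- Bell vector |φ⁻⟩. -/
def phiM : Fin 2 × Fin 2 → ℂ := ((Real.sqrt 2 : ℝ) : ℂ)⁻¹ • (ket 0 0 - ket 1 1)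
/-- Bell vector |ψ⁺⟩. -/
def psiP : Fin 2 × Fin 2 → ℂ := ((Real.sqrt 2 : ℝ) : ℂ)⁻¹ • (ket 0 1 + ket 1 0)
/-- Bell vector |ψ⁻⟩. -/
def psiM : Fin 2 × Fin 2 → ℂ := ((Real.sqrt 2 : ℝ) : ℂ)⁻¹ • (ket 0 1 - ket 1 0)

/-- The vector |ξ_{[i,j,k]}⟩ = (1/2)(|ψ⁻⟩ − i|φ⁻⟩ + 𝐢 j|φ⁺⟩ + k|ψ⁺⟩). -/
def xi (i j k : ℝ) : Fin 2 × Fin 2 → ℂ :=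
  (2 : ℂ)⁻¹ • (psiM - (i : ℂ) • phiM + (Complex.I * (j : ℂ)) • phiP + (k : ℂ) • psiP)

end

/-!
Write the trace as `w(a, b) / 16`, where `a`, `b` are the Bloch vectors `r`, `s` with their
coordinates multiplied by the signs `i, j, k` (still in the unit ball), `A = ∑ aₚ`, `B = ∑ bₚ`, and
`w(a, b) = (1 + A)(1 + B) + 1 - a ⬝ b`. Since `A² ≤ 3`, `|A| ≤ 2`. For the lower bound,
`w(a, b) = 2 + A + c ⬝ b` with `c = (1 + A)(1, 1, 1) - a`, and `|c|² = (2 + A)² - (1 - |a|²)`, so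
Cauchy–Schwarz gives `|c ⬝ b| ≤ 2 + A`. For the upper bound, `(1 + A)(1 + B) ≤ 9` and `-a ⬝ b ≤ 1`.
-/

open Finset

section PauliTrace

variable (m : Fin 3 → ℝ)

lemma rho_eq_of : rho m = !![(1 + m 2 : ℂ) / 2, (m 0 - m 1 * Complex.I) / 2;
    (m 0 + m 1 * Complex.I) / 2, (1 - m 2 : ℂ) / 2] := by
  ext p q
  fin_cases p <;> fin_cases q <;> simp [rho, σx, σy, σz] <;> ring

lemma trace_rho : (rho m).trace = 1 := by
  rw [rho_eq_of, trace_fin_two_of]; ring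

lemma trace_σx_mul_rho : (σx * rho m).trace = m 0 := by
  rw [rho_eq_of, σx, mul_fin_two, trace_fin_two_of]; ring

lemma trace_σy_mul_rho : (σy * rho m).trace = m 1 := by
  rw [rho_eq_of, σy, mul_fin_two, trace_fin_two_of]; ring_nf; rw [Complex.I_sq]; ring

lemma trace_σz_mul_rho : (σz * rho m).trace = m 2 := by
  rw [rho_eq_of, σz, mul_fin_two, trace_fin_two_of]; ring

end PauliTrace

lemma trace_kronecker_mul_kronecker {α n n' : Type*} [CommSemiring α] [Fintype n] [Fintype n']
    (A B : Matrix n n α) (A' B' : Matrix n' n' α) :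
    ((A ⊗ₖ A') * (B ⊗ₖ B')).trace = (A * B).trace * (A' * B').trace := by
  rw [← mul_kronecker_mul, trace_kronecker]

def sharpWeight (a b : Fin 3 → ℝ) : ℝ := (1 + ∑ p, a p) * (1 + ∑ p, b p) + 1 - a ⬝ᵥ b

lemma trace_piSharp_mul_kronecker_rho (i j k : ℝ) (r s : Fin 3 → ℝ) :
    (PiSharp i j k * (rho r ⊗ₖ rho s)).trace =
      ((sharpWeight (![i, j, k] * r) (![i, j, k] * s) / 16 : ℝ) : ℂ) := by
  simp only [PiSharp, Matrix.smul_mul, Matrix.add_mul, Matrix.one_mul, trace_add, trace_smul,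
    trace_kronecker, trace_kronecker_mul_kronecker, trace_rho, trace_σx_mul_rho, trace_σy_mul_rho,
    trace_σz_mul_rho, sharpWeight, dotProduct, Fin.sum_univ_three, Pi.mul_apply, smul_eq_mul]
  push_cast
  ring

section UnitBall

variable {ι : Type*} [Fintype ι] {a b : ι → ℝ}

lemma abs_dotProduct_le_one (ha : ∑ p, a p ^ 2 ≤ 1) (hb : ∑ p, b p ^ 2 ≤ 1) :
    |a ⬝ᵥ b| ≤ 1 := by
  rw [← sq_le_one_iff_abs_le_one]
  calc (a ⬝ᵥ b) ^ 2 ≤ (∑ p, a p ^ 2) * ∑ p, b p ^ 2 := sum_mul_sq_le_sq_mul_sq _ _ _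
    _ ≤ 1 := mul_le_one₀ ha (sum_nonneg fun _ _ => sq_nonneg _) hb

lemma sq_sum_le_card_of_sum_sq_le_one (ha : ∑ p, a p ^ 2 ≤ 1) : (∑ p, a p) ^ 2 ≤ Fintype.card ι :=
  calc (∑ p, a p) ^ 2 ≤ Fintype.card ι * ∑ p, a p ^ 2 := sq_sum_le_card_mul_sum_sq
    _ ≤ Fintype.card ι := mul_le_of_le_one_right (Nat.cast_nonneg _) ha

lemma sum_sq_mul_eq_of_sq_eq_one {σ : ι → ℝ} (hσ : ∀ p, σ p ^ 2 = 1) (r : ι → ℝ) :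
    ∑ p, (σ * r) p ^ 2 = ∑ p, r p ^ 2 := by
  simp [mul_pow, hσ]

end UnitBall

lemma abs_sum_fin_three_le_two {a : Fin 3 → ℝ} (ha : ∑ p, a p ^ 2 ≤ 1) : |∑ p, a p| ≤ 2 := by
  refine abs_le_of_sq_le_sq ?_ zero_le_two
  have := sq_sum_le_card_of_sum_sq_le_one ha
  simp only [Fintype.card_fin, Nat.cast_ofNat] at this
  linarith

section SharpWeight

variable {a b : Fin 3 → ℝ}

lemma sharpWeight_nonneg (ha : ∑ p, a p ^ 2 ≤ 1) (hb : ∑ p, b p ^ 2 ≤ 1) :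
    0 ≤ sharpWeight a b := by
  set A := ∑ p, a p
  set c : Fin 3 → ℝ := fun p => 1 + A - a p
  have hweight : sharpWeight a b = 2 + A + c ⬝ᵥ b := by
    simp only [sharpWeight, c, A, dotProduct, Fin.sum_univ_three]
    ring
  have hc : ∑ p, c p ^ 2 = (2 + A) ^ 2 - (1 - ∑ p, a p ^ 2) := by
    simp only [c, A, Fin.sum_univ_three]
    ring
  have hA_ge : -2 ≤ A := (abs_le.1 (abs_sum_fin_three_le_two ha)).1
  have hcb : (c ⬝ᵥ b) ^ 2 ≤ (2 + A) ^ 2 :=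
    calc (c ⬝ᵥ b) ^ 2 ≤ (∑ p, c p ^ 2) * ∑ p, b p ^ 2 := sum_mul_sq_le_sq_mul_sq _ _ _
      _ ≤ ∑ p, c p ^ 2 := mul_le_of_le_one_right (sum_nonneg fun _ _ => sq_nonneg _) hb
      _ ≤ (2 + A) ^ 2 := by rw [hc]; linarith
  have hcb_ge : -(2 + A) ≤ c ⬝ᵥ b := (abs_le_of_sq_le_sq' hcb (by linarith)).1
  linarith

lemma sharpWeight_le_sixteen (ha : ∑ p, a p ^ 2 ≤ 1) (hb : ∑ p, b p ^ 2 ≤ 1) :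
    sharpWeight a b ≤ 16 := by
  have hA := abs_sum_fin_three_le_two ha
  have hB := abs_sum_fin_three_le_two hb
  have hprod : (1 + ∑ p, a p) * (1 + ∑ p, b p) ≤ 3 * 3 :=
    calc (1 + ∑ p, a p) * (1 + ∑ p, b p) ≤ |1 + ∑ p, a p| * |1 + ∑ p, b p| := by
          rw [← abs_mul]; exact le_abs_self _
      _ ≤ 3 * 3 := by
          gcongr <;> refine (abs_add_le _ _).trans ?_ <;> rw [abs_one] <;> linarith
  unfold sharpWeight
  linarith [neg_abs_le (a ⬝ᵥ b), abs_dotProduct_le_one ha hb]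

end SharpWeight

/-- the Π#_{[i,j,k]} yield valid probabilities on all product two-qubit states. -/
theorem piSharp_valid_on_products :
    ∀ i ∈ pm, ∀ j ∈ pm, ∀ k ∈ pm, ∀ r s : Fin 3 → ℝ,
      r 0 ^ 2 + r 1 ^ 2 + r 2 ^ 2 ≤ 1 → s 0 ^ 2 + s 1 ^ 2 + s 2 ^ 2 ≤ 1 →
      0 ≤ (PiSharp i j k * (rho r ⊗ₖ rho s)).trace ∧
        (PiSharp i j k * (rho r ⊗ₖ rho s)).trace ≤ 1 := by
  intro i hi j hj k hk r s hr hs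
  have hsigns : ∀ p, ![i, j, k] p ^ 2 = 1 := by
    have hpm : ∀ x ∈ pm, x ^ 2 = 1 := by simp [pm]
    intro p
    fin_cases p
    exacts [hpm i hi, hpm j hj, hpm k hk]
  have hball : ∀ m : Fin 3 → ℝ, m 0 ^ 2 + m 1 ^ 2 + m 2 ^ 2 ≤ 1 →
      ∑ p, (![i, j, k] * m) p ^ 2 ≤ 1 := by
    intro m hm
    rwa [sum_sq_mul_eq_of_sq_eq_one hsigns, Fin.sum_univ_three]
  rw [trace_piSharp_mul_kronecker_rho, Complex.zero_le_real, ← Complex.ofReal_one,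
    Complex.real_le_real, div_le_one (by norm_num)]
  exact ⟨div_nonneg (sharpWeight_nonneg (hball r hr) (hball s hs)) (by norm_num),
    sharpWeight_le_sixteen (hball r hr) (hball s hs)⟩
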